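/- arXiv:2511.13129 — 3 statements merged into one kernel-verified Lean document; each statement's English description precedes it below -/
import Mathlib

section
/- Let p, q be coprime odd integers with 0 < q < p and define P_k ∈ ℤ[X] by P_{−1} = 0, P_0 = 1, P_k = ε_k X P_{k−1} + P_{k−2} with ε_k = (−1)^⌊kq/p⌋, and Q_k likewise with Q_{−1} = 1, Q_0 = 0. Then P_{p−2}² + 1 is divisible by P_{p−1} in ℤ[X], i.e., P_{p−2}² ≡ −1 (mod P_{p−1}). -/
open Polynomial Matrix

/-- `ε_k = (−1)^⌊kq/p⌋` (for `p > 0`, `Int.fdiv` is the floor of the rational `kq/p`). -/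
def eps (p q k : ℤ) : ℤ := (((-1 : ℤˣ) ^ ((k * q).fdiv p) : ℤˣ) : ℤ)

noncomputable def Amat (c : Polynomial ℤ) : Matrix (Fin 2) (Fin 2) (Polynomial ℤ) := !![c, 1; 1, 0]

noncomputable def Nmat (a : ℤ → Polynomial ℤ) : ℕ → Matrix (Fin 2) (Fin 2) (Polynomial ℤ)
  | 0 => 1
  | n+1 => Nmat a n * Amat (a (n+1))

noncomputable def Mrev (a : ℤ → Polynomial ℤ) : ℕ → Matrix (Fin 2) (Fin 2) (Polynomial ℤ)
  | 0 => 1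
  | n+1 => Amat (a (n+1)) * Mrev a n

lemma Nmat_zero (a : ℤ → Polynomial ℤ) : Nmat a 0 = 1 := rfl
lemma Nmat_succ (a : ℤ → Polynomial ℤ) (n : ℕ) : Nmat a (n+1) = Nmat a n * Amat (a (n+1)) := rfl
lemma Mrev_zero (a : ℤ → Polynomial ℤ) : Mrev a 0 = 1 := rfl
lemma Mrev_succ (a : ℤ → Polynomial ℤ) (n : ℕ) : Mrev a (n+1) = Amat (a (n+1)) * Mrev a n := rfl

lemma Amat_transpose (c : Polynomial ℤ) : (Amat c)ᵀ = Amat c := by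
  simp [Amat]; ext i j; fin_cases i <;> fin_cases j <;> rfl

lemma Nmat_transpose (a : ℤ → Polynomial ℤ) (n : ℕ) : (Nmat a n)ᵀ = Mrev a n := by
  induction n with
  | zero => simp [Nmat_zero, Mrev_zero]
  | succ n ih => rw [Nmat_succ, Mrev_succ, Matrix.transpose_mul, Amat_transpose, ih]

lemma Nmat_congr (a b : ℤ → Polynomial ℤ) (n : ℕ)
    (h : ∀ k : ℕ, 1 ≤ k → k ≤ n → a k = b k) : Nmat a n = Nmat b n := by
  induction n with
  | zero => rfl
  | succ n ih =>
    rw [Nmat_succ, Nmat_succ, ih fun k h1 h2 => h k h1 (h2.trans n.le_succ)]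
    rw [show ((n:ℤ)+1) = ((n+1 : ℕ) : ℤ) by push_cast; ring, h (n+1) (by omega) le_rfl]

lemma Nmat_prepend (a : ℤ → Polynomial ℤ) (n : ℕ) :
    Nmat a (n+1) = Amat (a 1) * Nmat (fun k => a (k+1)) n := by
  induction n with
  | zero => simp [Nmat_succ, Nmat_zero]
  | succ n ih =>
    rw [Nmat_succ, ih, Nmat_succ, Matrix.mul_assoc]
    norm_cast

lemma Mrev_eq (a : ℤ → Polynomial ℤ) (n : ℕ) :
    Mrev a n = Nmat (fun k => a ((n:ℤ) + 1 - k)) n := by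
  induction n with
  | zero => rfl
  | succ n ih =>
    rw [Mrev_succ, ih, Nmat_prepend]
    congr 1
    · push_cast; ring_nf
    · apply Nmat_congr
      intro k _ _
      congr 1; push_cast; ring

lemma Amat_det (c : Polynomial ℤ) : (Amat c).det = -1 := by
  simp [Amat, Matrix.det_fin_two_of]

lemma Nmat_det (a : ℤ → Polynomial ℤ) (n : ℕ) : (Nmat a n).det = (-1)^n := by
  induction n with
  | zero => simp [Nmat_zero]
  | succ n ih => rw [Nmat_succ, Matrix.det_mul, ih, Amat_det, pow_succ]

lemma odd_neg_one_zpow {e : ℤ} (h : Odd e) : (-1 : ℤˣ) ^ e = -1 := by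
  obtain ⟨s, rfl⟩ := h
  rw [show 2*s+1 = s+s+1 by ring, _root_.zpow_add, _root_.zpow_add, zpow_one,
    Int.units_mul_self, one_mul]

lemma neg_ediv_of_not_dvd {m p : ℤ} (hp : 0 < p) (h : ¬ p ∣ m) :
    (-m) / p = -(m / p) - 1 := by
  have h1 := Int.emod_add_mul_ediv m p
  have h2 : 0 ≤ m % p := Int.emod_nonneg m hp.ne'
  have h3 : m % p < p := Int.emod_lt_of_pos m hp
  have h4 : m % p ≠ 0 := fun hc => h (Int.dvd_of_emod_eq_zero hc)
  have := (Int.ediv_emod_unique hp (a := -m) (q := -(m/p)-1) (r := p - m % p)).mpr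
    ⟨by linarith [h1], by omega, by omega⟩
  exact this.1

lemma eps_symm (p q : ℤ) (hq : Odd q) (hq0 : 0 < q) (hqp : q < p) (hcop : IsCoprime p q)
    (k : ℤ) (hk1 : 1 ≤ k) (hk2 : k ≤ p - 1) : eps p q (p - k) = eps p q k := by
  have hp0 : 0 < p := by linarith
  have hnd : ¬ p ∣ k * q := by
    intro hd
    have : p ∣ k := hcop.dvd_of_dvd_mul_right hd
    have := Int.le_of_dvd (by omega) this
    omega
  have key : ((p - k) * q).fdiv p = q - 1 - (k * q).fdiv p := by
    rw [Int.fdiv_eq_ediv_of_nonneg _ hp0.le, Int.fdiv_eq_ediv_of_nonneg _ hp0.le]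
    have : (p - k) * q = -(k * q) + p * q := by ring
    rw [this, Int.add_mul_ediv_left _ _ hp0.ne', neg_ediv_of_not_dvd hp0 hnd]
    ring
  unfold eps
  rw [key]
  congr 1
  rcases Int.even_or_odd ((k*q).fdiv p) with he | ho
  · have : Even (q - 1 - (k*q).fdiv p) := by
      rcases hq with ⟨r, hr⟩; rcases he with ⟨s, hs⟩
      exact ⟨r - s, by omega⟩
    rw [this.neg_one_zpow, he.neg_one_zpow]
  · have : Odd (q - 1 - (k*q).fdiv p) := by
      rcases hq with ⟨r, hr⟩; rcases ho with ⟨s, hs⟩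
      exact ⟨r - s - 1, by omega⟩
    rw [odd_neg_one_zpow this, odd_neg_one_zpow ho]

theorem Ppm2_sq_eq_neg_one (p q : ℤ) (hp : Odd p) (hq : Odd q) (hq0 : 0 < q) (hqp : q < p)
    (hcop : IsCoprime p q)
    (P : ℤ → Polynomial ℤ)
    (hP0 : P 0 = 1) (hP1 : P (-1) = 0)
    (hPrec : ∀ k : ℤ, P k = C (eps p q k) * X * P (k - 1) + P (k - 2)) :
    P (p - 1) ∣ (P (p - 2)) ^ 2 + 1 := by
  have hp0 : 0 < p := by linarith
  set a : ℤ → Polynomial ℤ := fun k => C (eps p q k) * X with ha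
  -- top row of Nmat a n is (P n, P (n-1))
  have key : ∀ n : ℕ, (Nmat a n) 0 0 = P n ∧ (Nmat a n) 0 1 = P ((n:ℤ) - 1) := by
    intro n
    induction n with
    | zero => simp [Nmat_zero, hP0, hP1, Matrix.one_apply]
    | succ n ih =>
      obtain ⟨h00, h01⟩ := ih
      have e1 : ((n+1:ℕ) : ℤ) = (n:ℤ)+1 := by push_cast; ring
      constructor
      · rw [Nmat_succ]
        rw [show ((Nmat a n * Amat (a ((n:ℤ)+1))) 0 0) = (Nmat a n) 0 0 * a ((n:ℤ)+1) + (Nmat a n) 0 1 by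
          simp [Amat, Matrix.mul_apply, Fin.sum_univ_two]]
        rw [h00, h01, e1, hPrec ((n:ℤ)+1),
          show (n:ℤ)+1-1 = (n:ℤ) by ring, show (n:ℤ)+1-2 = (n:ℤ)-1 by ring]
        simp only [ha]
        ring
      · rw [Nmat_succ]
        rw [show ((Nmat a n * Amat (a ((n:ℤ)+1))) 0 1) = (Nmat a n) 0 0 by
          simp [Amat, Matrix.mul_apply, Fin.sum_univ_two]]
        rw [h00, e1, show (n:ℤ)+1-1 = (n:ℤ) by ring]
  -- choose n = p - 1
  obtain ⟨n, hn⟩ : ∃ n : ℕ, (n : ℤ) = p - 1 := ⟨(p-1).toNat, Int.toNat_of_nonneg (by omega)⟩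
  -- symmetry
  have hsymm : (Nmat a n)ᵀ = Nmat a n := by
    rw [Nmat_transpose, Mrev_eq]
    apply Nmat_congr
    intro k hk1 hk2
    show a ((n:ℤ) + 1 - k) = a k
    simp only [ha]
    congr 1
    rw [show (n:ℤ) + 1 - (k:ℤ) = p - k by omega]
    refine congrArg C (eps_symm p q hq hq0 hqp hcop k (by exact_mod_cast hk1) ?_)
    have : (k:ℤ) ≤ (n:ℤ) := by exact_mod_cast hk2
    omega
  have heven : Even n := by
    rcases hp with ⟨r, hr⟩
    have : Even (n:ℤ) := ⟨r, by omega⟩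
    exact Int.even_coe_nat n |>.mp this
  have hNdet : (Nmat a n).det = 1 := by
    rw [Nmat_det, heven.neg_one_pow]
  rw [Matrix.det_fin_two] at hNdet
  have h10 : Nmat a n 1 0 = Nmat a n 0 1 := by
    conv_rhs => rw [← hsymm]
    rfl
  obtain ⟨h00, h01⟩ := key n
  rw [h10, h00, h01, hn, show p - 1 - 1 = p - 2 by ring] at hNdet
  exact ⟨Nmat a n 1 1, by linear_combination -hNdet⟩
end

section
/- Let p, q be coprime odd integers with 0 < q < p and let P_k be the associated polynomial sequence (P_{−1}=0, P_0=1, P_k = ε_k X P_{k−1} + P_{k−2}, ε_k = (−1)^⌊kq/p⌋, extended to all k ∈ ℤ). Then P_{−2−k} ≡ P_k (mod P_{p−1}) in ℚ[X] for all k ∈ ℤ. -/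
open Polynomial

lemma units_neg_one_zpow_neg (n : ℤ) : (-1 : ℤˣ) ^ (-n) = (-1 : ℤˣ) ^ n := by
  rw [zpow_neg]
  rcases Int.units_eq_one_or ((-1 : ℤˣ) ^ n) with h | h <;> simp [h]

lemma units_sq_z (u : ℤˣ) : u ^ (2:ℤ) = 1 := by
  rw [show (2:ℤ) = ((2:ℕ):ℤ) from rfl, zpow_natCast]
  rcases Int.units_eq_one_or u with h | h <;> simp [h]

lemma units_neg_one_zpow_odd {n : ℤ} (h : Odd n) : (-1 : ℤˣ) ^ n = -1 := by
  obtain ⟨m, rfl⟩ := h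
  rw [zpow_add, zpow_one, mul_comm (2:ℤ) m, zpow_mul, units_sq_z, one_mul]

lemma eps_zero (p q : ℤ) : eps p q 0 = 1 := by
  simp [eps]

lemma eps_add_p (p q : ℤ) (hp0 : 0 < p) (hq : Odd q) (k : ℤ) :
    eps p q (k + p) = - eps p q k := by
  unfold eps
  rw [Int.fdiv_eq_ediv_of_nonneg _ hp0.le, Int.fdiv_eq_ediv_of_nonneg _ hp0.le,
    show (k + p) * q = k * q + q * p by ring, Int.add_mul_ediv_right _ _ hp0.ne',
    zpow_add, units_neg_one_zpow_odd hq]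
  push_cast
  ring

lemma eps_sub_p (p q : ℤ) (hp0 : 0 < p) (hq : Odd q) (k : ℤ) :
    eps p q (k - p) = - eps p q k := by
  have := eps_add_p p q hp0 hq (k - p)
  rw [sub_add_cancel] at this
  omega

lemma eps_neg (p q : ℤ) (hp0 : 0 < p) (hcop : IsCoprime p q) {k : ℤ}
    (h1 : 0 < k) (h2 : k < p) : eps p q (-k) = - eps p q k := by
  have hnd : ¬ p ∣ k * q := by
    intro h
    have : p ∣ k := hcop.dvd_of_dvd_mul_right h
    have := Int.le_of_dvd h1 this
    omega
  set m := k * q with hm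
  have hr0 : 0 ≤ m % p := Int.emod_nonneg _ hp0.ne'
  have hrp : m % p < p := Int.emod_lt_of_pos _ hp0
  have hrne : m % p ≠ 0 := fun h => hnd (Int.dvd_of_emod_eq_zero h)
  have hdm : p * (m / p) + m % p = m := Int.mul_ediv_add_emod _ _
  have key : (-m) / p = -(m / p) - 1 := by
    have := (Int.ediv_emod_unique (a := -m) (b := p) (r := p - m % p)
      (q := -(m / p) - 1) hp0).mpr ⟨by linarith, by omega, by omega⟩
    exact this.1
  unfold eps
  rw [Int.fdiv_eq_ediv_of_nonneg _ hp0.le, Int.fdiv_eq_ediv_of_nonneg _ hp0.le,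
    show (-k) * q = -m by ring, key,
    show -(m / p) - 1 = -(m / p + 1) by ring, units_neg_one_zpow_neg,
    zpow_add, zpow_one]
  push_cast
  ring

/-- the sign `(−1)^k` as a rational. -/
def sgn (k : ℤ) : ℚ := (((-1 : ℤˣ) ^ k : ℤˣ) : ℤ)

lemma sgn_sub_one (k : ℤ) : sgn (k - 1) = - sgn k := by
  unfold sgn
  rw [sub_eq_add_neg, zpow_add, units_neg_one_zpow_odd (n := -1) ⟨-1, by ring⟩]
  push_cast
  ring

lemma sgn_mul_self (k : ℤ) : sgn k * sgn k = 1 := by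
  unfold sgn
  rcases Int.units_eq_one_or ((-1 : ℤˣ) ^ k) with h | h <;> rw [h] <;> norm_num

lemma sgn_zero : sgn 0 = 1 := by simp [sgn]

lemma sgn_neg_one : sgn (-1) = -1 := by
  unfold sgn
  rw [units_neg_one_zpow_odd (n := -1) ⟨-1, by ring⟩]
  norm_num

lemma sgn_neg_two_sub (k : ℤ) : sgn (-2 - k) = sgn k := by
  unfold sgn
  rw [show (-2 - k : ℤ) = -(k + 2) by ring, units_neg_one_zpow_neg, zpow_add,
    units_sq_z, mul_one]

lemma int_twoStep {C : ℤ → Prop} (hm1 : C (-1)) (h0 : C 0)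
    (up : ∀ k : ℤ, C (k - 1) → C (k - 2) → C k)
    (down : ∀ k : ℤ, C (k + 1) → C (k + 2) → C k) : ∀ k, C k := by
  have hu : ∀ n : ℕ, C ((n : ℤ) - 1) ∧ C (n : ℤ) := by
    intro n
    induction n with
    | zero => exact ⟨by norm_num; exact hm1, h0⟩
    | succ m ih =>
      refine ⟨?_, ?_⟩
      · rw [show ((m+1 : ℕ) : ℤ) - 1 = (m : ℤ) by push_cast; ring]; exact ih.2
      · refine up _ ?_ ?_
        · rw [show ((m+1 : ℕ) : ℤ) - 1 = (m : ℤ) by push_cast; ring]; exact ih.2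
        · rw [show ((m+1 : ℕ) : ℤ) - 2 = (m : ℤ) - 1 by push_cast; ring]; exact ih.1
  have hd : ∀ n : ℕ, C (-(n : ℤ)) ∧ C (-(n : ℤ) - 1) := by
    intro n
    induction n with
    | zero => exact ⟨by norm_num; exact h0, by norm_num; exact hm1⟩
    | succ m ih =>
      refine ⟨?_, ?_⟩
      · rw [show -((m+1 : ℕ) : ℤ) = -(m : ℤ) - 1 by push_cast; ring]; exact ih.2
      · refine down _ ?_ ?_
        · rw [show -((m+1 : ℕ) : ℤ) - 1 + 1 = -(m : ℤ) - 1 by push_cast; ring]; exact ih.2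
        · rw [show -((m+1 : ℕ) : ℤ) - 1 + 2 = -(m : ℤ) by push_cast; ring]; exact ih.1
  intro k
  rcases le_or_gt 0 k with h | h
  · have := (hu k.toNat).2
    rwa [Int.toNat_of_nonneg h] at this
  · have := (hd (-k).toNat).1
    rwa [Int.toNat_of_nonneg (by omega), neg_neg] at this

lemma seq_congr (Pi : ℚ[X]) (a : ℤ → ℚ[X]) (f g : ℤ → ℚ[X])
    (hf : ∀ k, f k = a k * f (k - 1) + f (k - 2))
    (hg : ∀ k, g k = a k * g (k - 1) + g (k - 2))
    (hm1 : Pi ∣ f (-1) - g (-1)) (h0 : Pi ∣ f 0 - g 0) : ∀ k, Pi ∣ f k - g k := by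
  refine int_twoStep hm1 h0 ?_ ?_
  · intro k ih1 ih2
    have e : f k - g k = a k * (f (k-1) - g (k-1)) + (f (k-2) - g (k-2)) := by
      linear_combination hf k - hg k
    rw [e]
    exact dvd_add (ih1.mul_left _) ih2
  · intro k ih1 ih2
    have h2 := hf (k + 2)
    have h3 := hg (k + 2)
    rw [show (k+2 : ℤ) - 1 = k + 1 by ring, show (k+2 : ℤ) - 2 = k by ring] at h2 h3
    have e : f k - g k = (f (k+2) - g (k+2)) - a (k+2) * (f (k+1) - g (k+1)) := by
      linear_combination h3 - h2
    rw [e]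
    exact dvd_sub ih2 (ih1.mul_left _)

theorem P_reflection (p q : ℤ) (hp : Odd p) (hq : Odd q) (hq0 : 0 < q) (hqp : q < p)
    (hcop : IsCoprime p q)
    (P : ℤ → Polynomial ℚ)
    (hP0 : P 0 = 1) (hP1 : P (-1) = 0)
    (hPrec : ∀ k : ℤ, P k = C ((eps p q k : ℚ)) * X * P (k - 1) + P (k - 2)) :
    ∀ k : ℤ, P (p - 1) ∣ (P (-2 - k) - P k) := by
  have hp0 : 0 < p := hq0.trans hqp
  have hp2 : 2 ≤ p := by omega
  have hPrec' : ∀ k : ℤ, P (k - 2) = P k - C ((eps p q k : ℚ)) * X * P (k - 1) := by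
    intro k; linear_combination -hPrec k
  have hPm2 : P (-2) = 1 := by
    have h := hPrec 0
    rw [hP0, show (0:ℤ) - 1 = -1 by norm_num, show (0:ℤ) - 2 = -2 by norm_num, hP1] at h
    simpa using h.symm
  -- base window : exact reflection for -1 ≤ k ≤ p-1
  have base : ∀ n : ℕ, (n : ℤ) ≤ p - 1 →
      P (-1 - (n:ℤ)) = P ((n:ℤ) - 1) ∧ P (-2 - (n:ℤ)) = P (n:ℤ) := by
    intro n
    induction n with
    | zero =>
      intro _
      constructor
      · norm_num
      · norm_num [hPm2, hP0]
    | succ m ih =>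
      intro hle
      have hle' : (m : ℤ) ≤ p - 1 := by push_cast at hle ⊢; omega
      obtain ⟨ih1, ih2⟩ := ih hle'
      have c1 : ((m+1:ℕ):ℤ) = (m:ℤ) + 1 := by push_cast; ring
      constructor
      · rw [c1, show -1 - ((m:ℤ)+1) = -2 - (m:ℤ) by ring,
          show (m:ℤ)+1-1 = (m:ℤ) by ring]
        exact ih2
      · rw [c1, show -2 - ((m:ℤ)+1) = (-1 - (m:ℤ)) - 2 by ring,
          hPrec' (-1 - (m:ℤ)), show (-1 - (m:ℤ)) - 1 = -2 - (m:ℤ) by ring]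
        have he : eps p q (-1 - (m:ℤ)) = - eps p q ((m:ℤ)+1) := by
          rw [show (-1 - (m:ℤ)) = -((m:ℤ)+1) by ring]
          refine eps_neg p q hp0 hcop (by positivity) (by push_cast at hle; omega)
        have hr := hPrec ((m:ℤ)+1)
        rw [show (m:ℤ)+1-1 = (m:ℤ) by ring, show (m:ℤ)+1-2 = (m:ℤ)-1 by ring] at hr
        rw [he, ih1, ih2]
        push_cast
        simp only [map_neg]
        linear_combination -hr
  -- shift lemmas
  have shiftup : ∀ k : ℤ, P (p-1) ∣ C (sgn k) * P (k + p) - P p * P k := by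
    refine seq_congr (P (p-1)) (fun k => C ((eps p q k : ℚ)) * X)
      (fun k => C (sgn k) * P (k + p)) (fun k => P p * P k) ?_ ?_ ?_ ?_
    · intro k
      have h := hPrec (k + p)
      rw [show k + p - 1 = (k-1) + p by ring, show k + p - 2 = (k-2) + p by ring,
        eps_add_p p q hp0 hq] at h
      show C (sgn k) * P (k + p) =
        C ((eps p q k : ℚ)) * X * (C (sgn (k-1)) * P ((k-1) + p)) +
          C (sgn (k-2)) * P ((k-2) + p)
      have s1 : sgn (k-1) = - sgn k := sgn_sub_one k
      have s2 : sgn (k-2) = sgn k := by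
        rw [show k-2 = (k-1)-1 by ring, sgn_sub_one, sgn_sub_one]; ring
      rw [s1, s2]
      push_cast at h
      simp only [map_neg] at h ⊢
      linear_combination C (sgn k) * h
    · intro k
      show P p * P k = C ((eps p q k : ℚ)) * X * (P p * P (k-1)) + P p * P (k-2)
      linear_combination P p * hPrec k
    · show P (p-1) ∣ C (sgn (-1)) * P (-1 + p) - P p * P (-1)
      rw [hP1, sgn_neg_one, show -1 + p = p - 1 by ring]
      simp only [map_neg, map_one, mul_zero, sub_zero, neg_one_mul]
      exact (dvd_neg).mpr dvd_rfl
    · show P (p-1) ∣ C (sgn 0) * P (0 + p) - P p * P 0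
      rw [hP0, sgn_zero, show (0:ℤ) + p = p by ring]
      simp
  have shiftdown : ∀ k : ℤ, P (p-1) ∣ C (sgn k) * P (k - p) - P p * P k := by
    refine seq_congr (P (p-1)) (fun k => C ((eps p q k : ℚ)) * X)
      (fun k => C (sgn k) * P (k - p)) (fun k => P p * P k) ?_ ?_ ?_ ?_
    · intro k
      have h := hPrec (k - p)
      rw [show k - p - 1 = (k-1) - p by ring, show k - p - 2 = (k-2) - p by ring,
        eps_sub_p p q hp0 hq] at h
      show C (sgn k) * P (k - p) =
        C ((eps p q k : ℚ)) * X * (C (sgn (k-1)) * P ((k-1) - p)) +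
          C (sgn (k-2)) * P ((k-2) - p)
      have s1 : sgn (k-1) = - sgn k := sgn_sub_one k
      have s2 : sgn (k-2) = sgn k := by
        rw [show k-2 = (k-1)-1 by ring, sgn_sub_one, sgn_sub_one]; ring
      rw [s1, s2]
      push_cast at h
      simp only [map_neg] at h ⊢
      linear_combination C (sgn k) * h
    · intro k
      show P p * P k = C ((eps p q k : ℚ)) * X * (P p * P (k-1)) + P p * P (k-2)
      linear_combination P p * hPrec k
    · show P (p-1) ∣ C (sgn (-1)) * P (-1 - p) - P p * P (-1)
      have hb := (base (p-1).toNat (by rw [Int.toNat_of_nonneg (by omega)])).2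
      rw [Int.toNat_of_nonneg (by omega : (0:ℤ) ≤ p - 1)] at hb
      rw [hP1, sgn_neg_one, show -1 - p = -2 - (p-1) by ring, hb]
      simp only [map_neg, map_one, mul_zero, sub_zero, neg_one_mul]
      exact (dvd_neg).mpr dvd_rfl
    · show P (p-1) ∣ C (sgn 0) * P (0 - p) - P p * P 0
      have hb := (base (p-1).toNat (by rw [Int.toNat_of_nonneg (by omega)])).1
      rw [Int.toNat_of_nonneg (by omega : (0:ℤ) ≤ p - 1),
        show p - 1 - 1 = p - 2 by ring] at hb
      rw [hP0, sgn_zero, show (0:ℤ) - p = -1 - (p-1) by ring, hb, map_one, one_mul,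
        mul_one]
      refine ⟨-(C ((eps p q p : ℚ)) * X), ?_⟩
      linear_combination -(hPrec p)
  -- step lemmas
  have stepUp : ∀ k : ℤ, P (p-1) ∣ P (-2-k) - P k →
      P (p-1) ∣ P (-2-(k+p)) - P (k+p) := by
    intro k hD
    have h1 := shiftdown (-2-k)
    have h2 := shiftup k
    have key : P (p-1) ∣ C (sgn k) * (P (-2-(k+p)) - P (k+p)) := by
      have e : C (sgn k) * (P (-2-(k+p)) - P (k+p)) =
          (C (sgn (-2-k)) * P ((-2-k) - p) - P p * P (-2-k)) -
            (C (sgn k) * P (k+p) - P p * P k) + P p * (P (-2-k) - P k) := by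
        rw [sgn_neg_two_sub, show (-2-k) - p = -2-(k+p) by ring]; ring
      rw [e]
      exact dvd_add (dvd_sub h1 h2) (hD.mul_left _)
    have e2 : P (-2-(k+p)) - P (k+p) =
        C (sgn k) * (C (sgn k) * (P (-2-(k+p)) - P (k+p))) := by
      rw [← mul_assoc, ← C_mul, sgn_mul_self, C_1, one_mul]
    rw [e2]
    exact key.mul_left _
  have stepDown : ∀ k : ℤ, P (p-1) ∣ P (-2-k) - P k →
      P (p-1) ∣ P (-2-(k-p)) - P (k-p) := by
    intro k hD
    have h1 := shiftup (-2-k)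
    have h2 := shiftdown k
    have key : P (p-1) ∣ C (sgn k) * (P (-2-(k-p)) - P (k-p)) := by
      have e : C (sgn k) * (P (-2-(k-p)) - P (k-p)) =
          (C (sgn (-2-k)) * P ((-2-k) + p) - P p * P (-2-k)) -
            (C (sgn k) * P (k-p) - P p * P k) + P p * (P (-2-k) - P k) := by
        rw [sgn_neg_two_sub, show (-2-k) + p = -2-(k-p) by ring]; ring
      rw [e]
      exact dvd_add (dvd_sub h1 h2) (hD.mul_left _)
    have e2 : P (-2-(k-p)) - P (k-p) =
        C (sgn k) * (C (sgn k) * (P (-2-(k-p)) - P (k-p))) := by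
      rw [← mul_assoc, ← C_mul, sgn_mul_self, C_1, one_mul]
    rw [e2]
    exact key.mul_left _
  have main : ∀ n : ℕ, ∀ k : ℤ, 0 ≤ k → k ≤ p - 1 →
      (P (p-1) ∣ P (-2-(k + (n:ℤ)*p)) - P (k + (n:ℤ)*p)) ∧
      (P (p-1) ∣ P (-2-(k - (n:ℤ)*p)) - P (k - (n:ℤ)*p)) := by
    intro n
    induction n with
    | zero =>
      intro k hk1 hk2
      have hb := (base k.toNat (by rwa [Int.toNat_of_nonneg hk1])).2
      rw [Int.toNat_of_nonneg hk1] at hb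
      norm_num [hb]
    | succ m ih =>
      intro k hk1 hk2
      obtain ⟨ih1, ih2⟩ := ih k hk1 hk2
      constructor
      · rw [show k + ((m+1:ℕ):ℤ)*p = (k + (m:ℤ)*p) + p by push_cast; ring]
        exact stepUp _ ih1
      · rw [show k - ((m+1:ℕ):ℤ)*p = (k - (m:ℤ)*p) - p by push_cast; ring]
        exact stepDown _ ih2
  intro k
  have hk : k = k % p + (k / p) * p := by
    have := Int.emod_add_mul_ediv k p
    linarith
  have hr1 : 0 ≤ k % p := Int.emod_nonneg _ hp0.ne'
  have hr2 : k % p ≤ p - 1 := by have := Int.emod_lt_of_pos k hp0; omega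
  rcases le_or_gt 0 (k / p) with h | h
  · have := (main (k / p).toNat (k % p) hr1 hr2).1
    rwa [Int.toNat_of_nonneg h, ← hk] at this
  · have := (main (-(k / p)).toNat (k % p) hr1 hr2).2
    rw [Int.toNat_of_nonneg (by omega), show k % p - -(k / p) * p = k % p + (k / p) * p
      by ring, ← hk] at this
    exact this
end

section
/- Let p, q be coprime odd integers with 0 < q < p, let P_k ∈ ℤ[X] be the sequence with P_{−1}=0, P_0=1, P_k = ε_k X P_{k−1} + P_{k−2} where ε_k = (−1)^⌊kq/p⌋ (extended to all k ∈ ℤ), and let ℓ′ be the unique odd integer with 0 < ℓ′ < 2p and qℓ′ ≡ −1 (mod 2p). Then for all −1 ≤ k < p one has the polynomial identity (P_{ℓ′} − P_{ℓ′−2}) · P_k = P_{ℓ′+k} − P_{ℓ′−k−2}, and for −p < k < 0 the same identity holds with a minus sign on the right-hand side. -/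
open Polynomial

/-- `(-1)^n = 1` in `ℤˣ` for even integer `n`. -/
lemma neg_one_zpow_even (n : ℤ) (h : Even n) : (-1 : ℤˣ) ^ n = 1 := by
  obtain ⟨c, rfl⟩ := h
  rw [zpow_add]
  exact Int.units_mul_self _

lemma ediv_sub_one_of_not_dvd (p a : ℤ) (hp : 0 < p) (h : ¬ p ∣ a) :
    (a - 1) / p = a / p := by
  have hr0 : 0 ≤ a % p := Int.emod_nonneg a hp.ne'
  have hrp : a % p < p := Int.emod_lt_of_pos a hp
  have hrne : a % p ≠ 0 := fun hc => h (Int.dvd_of_emod_eq_zero hc)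
  have key : a - 1 = (a % p - 1) + p * (a / p) := by
    have := Int.mul_ediv_add_emod a p
    linarith
  rw [key, Int.add_mul_ediv_left _ _ hp.ne',
    Int.ediv_eq_zero_of_lt (by omega) (by omega), zero_add]

lemma ediv_neg_sub_one (p a : ℤ) (hp : 0 < p) :
    (-a - 1) / p = -(a / p) - 1 := by
  have hr0 : 0 ≤ a % p := Int.emod_nonneg a hp.ne'
  have hrp : a % p < p := Int.emod_lt_of_pos a hp
  have key : -a - 1 = (p - a % p - 1) + p * (-(a / p) - 1) := by
    have := Int.mul_ediv_add_emod a p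
    linarith
  rw [key, Int.add_mul_ediv_left _ _ hp.ne',
    Int.ediv_eq_zero_of_lt (by omega) (by omega), zero_add]

lemma neg_one_zpow_add_even (a c : ℤ) : (-1 : ℤˣ) ^ (a + 2 * c) = (-1 : ℤˣ) ^ a := by
  rw [show a + 2 * c = a + (c + c) by ring, zpow_add, zpow_add, Int.units_mul_self, mul_one]

lemma neg_one_zpow_add_odd (a c : ℤ) : (-1 : ℤˣ) ^ (a + 1 + 2 * c) = -((-1 : ℤˣ) ^ a) := by
  rw [show a + 1 + 2 * c = a + (c + c) + 1 by ring, zpow_add, zpow_add, zpow_add,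
    Int.units_mul_self, mul_one, zpow_one, mul_neg_one]

/-- Two-step induction upward from `-1`. -/
lemma int_twostep_up (Q : ℤ → Prop) (h0 : Q (-1)) (h1 : Q 0)
    (hstep : ∀ k : ℤ, 1 ≤ k → Q (k - 2) → Q (k - 1) → Q k) :
    ∀ k : ℤ, -1 ≤ k → Q k := by
  have key : ∀ n : ℕ, Q ((n : ℤ) - 1) := by
    intro n
    induction n using Nat.strong_induction_on with
    | _ n ih =>
      match n with
      | 0 => simpa using h0
      | 1 => simpa using h1
      | (n + 2) =>
        have ha := ih n (by omega)
        have hb := ih (n + 1) (by omega)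
        have e2 : ((n : ℤ) + 2 - 1) - 2 = (n : ℤ) - 1 := by ring
        have e1 : ((n : ℤ) + 2 - 1) - 1 = ((n : ℤ) + 1) - 1 := by ring
        have := hstep ((n : ℤ) + 2 - 1) (by omega)
          (by rw [e2]; exact ha) (by rw [e1]; push_cast at hb ⊢; exact hb)
        have e0 : ((n + 2 : ℕ) : ℤ) - 1 = (n : ℤ) + 2 - 1 := by push_cast; ring
        rw [e0]; exact this
  intro k hk
  have := key (k + 1).toNat
  rwa [show ((k + 1).toNat : ℤ) - 1 = k by omega] at this

/-- Two-step induction downward from `-1`. -/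
lemma int_twostep_down (Q : ℤ → Prop) (h0 : Q (-1)) (h1 : Q (-2))
    (hstep : ∀ k : ℤ, k ≤ -3 → Q (k + 2) → Q (k + 1) → Q k) :
    ∀ k : ℤ, k ≤ -1 → Q k := by
  have key : ∀ n : ℕ, Q (-(n : ℤ) - 1) := by
    intro n
    induction n using Nat.strong_induction_on with
    | _ n ih =>
      match n with
      | 0 => simpa using h0
      | 1 => simpa using h1
      | (n + 2) =>
        have ha := ih n (by omega)
        have hb := ih (n + 1) (by omega)
        have e2 : (-(n : ℤ) - 3) + 2 = -(n : ℤ) - 1 := by ring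
        have e1 : (-(n : ℤ) - 3) + 1 = -((n : ℤ) + 1) - 1 := by ring
        have := hstep (-(n : ℤ) - 3) (by omega)
          (by rw [e2]; exact ha) (by rw [e1]; push_cast at hb ⊢; exact hb)
        have e0 : -((n + 2 : ℕ) : ℤ) - 1 = -(n : ℤ) - 3 := by push_cast; ring
        rw [e0]; exact this
  intro k hk
  have := key (-(k + 1)).toNat
  rwa [show -((-(k + 1)).toNat : ℤ) - 1 = k by omega] at this

theorem sum_of_two_identity (p q ℓ' : ℤ) (hp : Odd p) (hq : Odd q) (hq0 : 0 < q) (hqp : q < p)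
    (hcop : IsCoprime p q)
    (hℓodd : Odd ℓ') (hℓ0 : 0 < ℓ') (hℓ2p : ℓ' < 2 * p) (hℓ : 2 * p ∣ q * ℓ' + 1)
    (P : ℤ → Polynomial ℤ)
    (hP0 : P 0 = 1) (hP1 : P (-1) = 0)
    (hPrec : ∀ k : ℤ, P k = C (eps p q k) * X * P (k - 1) + P (k - 2)) :
    (∀ k : ℤ, -1 ≤ k → k < p →
        (P ℓ' - P (ℓ' - 2)) * P k = P (ℓ' + k) - P (ℓ' - k - 2)) ∧
    (∀ k : ℤ, -p < k → k < 0 →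
        (P ℓ' - P (ℓ' - 2)) * P k = -(P (ℓ' + k) - P (ℓ' - k - 2))) := by
  have hp0 : 0 < p := lt_trans hq0 hqp
  obtain ⟨m, hm⟩ := hℓ
  have hlq : ℓ' * q = 2 * p * m - 1 := by linear_combination hm
  -- the eps identities
  have hndvd : ∀ k : ℤ, ¬ p ∣ k → ¬ p ∣ k * q :=
    fun k hk hd => hk (hcop.dvd_of_dvd_mul_right hd)
  have heps1 : ∀ k : ℤ, ¬ p ∣ k → eps p q (ℓ' + k) = eps p q k := by
    intro k hk
    have e1 : (ℓ' + k) * q = (k * q - 1) + p * (2 * m) := by linear_combination hlq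
    have e2 : ((ℓ' + k) * q).fdiv p = (k * q).fdiv p + 2 * m := by
      simp only [show ∀ a : ℤ, a.fdiv p = a / p from fun a => Int.fdiv_eq_ediv_of_nonneg a hp0.le]
      rw [e1, Int.add_mul_ediv_left _ _ hp0.ne',
        ediv_sub_one_of_not_dvd p (k * q) hp0 (hndvd k hk)]
    unfold eps
    rw [e2, neg_one_zpow_add_even]
  have heps2 : ∀ k : ℤ, ¬ p ∣ k → eps p q (ℓ' - k) = - eps p q k := by
    intro k hk
    have e1 : (ℓ' - k) * q = (-(k * q) - 1) + p * (2 * m) := by linear_combination hlq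
    have e2 : ((ℓ' - k) * q).fdiv p = (k * q).fdiv p + 1 + 2 * (m - (k * q).fdiv p - 1) := by
      simp only [show ∀ a : ℤ, a.fdiv p = a / p from fun a => Int.fdiv_eq_ediv_of_nonneg a hp0.le]
      rw [e1, Int.add_mul_ediv_left _ _ hp0.ne', ediv_neg_sub_one p (k * q) hp0]
      ring
    unfold eps
    rw [e2, neg_one_zpow_add_odd]
    exact Units.val_neg _
  set D := P ℓ' - P (ℓ' - 2) with hD
  -- the shifted recurrence
  have hS : ∀ k : ℤ, ¬ p ∣ k →
      P (ℓ' + k) - P (ℓ' - k - 2) =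
        C (eps p q k) * X * (P (ℓ' + k - 1) - P (ℓ' - k - 1)) +
          (P (ℓ' + k - 2) - P (ℓ' - k)) := by
    intro k hk
    have h1 := hPrec (ℓ' + k)
    have h2 := hPrec (ℓ' - k)
    rw [heps1 k hk] at h1
    rw [heps2 k hk, map_neg] at h2
    linear_combination h1 + h2
  have hPm2 : P (-2) = 1 := by
    have h := hPrec 0
    rw [hP0] at h
    rw [show (0:ℤ) - 1 = -1 by ring, hP1, show (0:ℤ) - 2 = -2 by ring] at h
    linear_combination -h
  have hnd : ∀ k : ℤ, 0 < k → k < p → ¬ p ∣ k := by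
    intro k h1 h2 hd
    exact absurd (Int.le_of_dvd h1 hd) (by omega)
  -- positive range
  have hpos : ∀ k : ℤ, -1 ≤ k → (k < p → P (ℓ' + k) - P (ℓ' - k - 2) = D * P k) := by
    apply int_twostep_up (fun k => k < p → P (ℓ' + k) - P (ℓ' - k - 2) = D * P k)
    · intro _
      rw [show ℓ' + -1 = ℓ' - 1 by ring, show ℓ' - (-1) - 2 = ℓ' - 1 by ring, hP1]
      ring
    · intro _
      rw [show ℓ' + 0 = ℓ' by ring, show ℓ' - 0 - 2 = ℓ' - 2 by ring, hP0]
      ring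
    · intro k hk1 ih2 ih1 hkp
      have hdk := hnd k (by omega) hkp
      have ih1' := ih1 (by omega)
      have ih2' := ih2 (by omega)
      rw [show ℓ' + (k - 1) = ℓ' + k - 1 by ring,
        show ℓ' - (k - 1) - 2 = ℓ' - k - 1 by ring] at ih1'
      rw [show ℓ' + (k - 2) = ℓ' + k - 2 by ring,
        show ℓ' - (k - 2) - 2 = ℓ' - k by ring] at ih2'
      have hsk := hS k hdk
      have hrk := hPrec k
      linear_combination hsk + (C (eps p q k) * X) * ih1' + ih2' - D * hrk
  -- negative range
  have hneg : ∀ k : ℤ, k ≤ -1 → (-p < k → P (ℓ' + k) - P (ℓ' - k - 2) = -(D * P k)) := by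
    apply int_twostep_down (fun k => -p < k → P (ℓ' + k) - P (ℓ' - k - 2) = -(D * P k))
    · intro _
      rw [show ℓ' + -1 = ℓ' - 1 by ring, show ℓ' - (-1) - 2 = ℓ' - 1 by ring, hP1]
      ring
    · intro _
      rw [show ℓ' + -2 = ℓ' - 2 by ring, show ℓ' - (-2) - 2 = ℓ' by ring, hPm2]
      ring
    · intro k hk3 ih2 ih1 hkp
      have hdk : ¬ p ∣ (k + 2) := by
        intro hd
        have := Int.le_of_dvd (b := -(k+2)) (by omega) hd.neg_right
        omega
      have ih2' := ih2 (by omega)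
      have ih1' := ih1 (by omega)
      rw [show ℓ' + (k + 2) = ℓ' + k + 2 by ring,
        show ℓ' - (k + 2) - 2 = ℓ' - k - 4 by ring] at ih2'
      rw [show ℓ' + (k + 1) = ℓ' + k + 1 by ring,
        show ℓ' - (k + 1) - 2 = ℓ' - k - 3 by ring] at ih1'
      have hsk := hS (k + 2) hdk
      rw [show ℓ' - (k + 2) - 2 = ℓ' - k - 4 by ring,
        show ℓ' + (k + 2) - 1 = ℓ' + k + 1 by ring,
        show ℓ' - (k + 2) - 1 = ℓ' - k - 3 by ring,
        show ℓ' + (k + 2) - 2 = ℓ' + k by ring,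
        show ℓ' + (k + 2) = ℓ' + k + 2 by ring,
        show ℓ' - (k + 2) = ℓ' - k - 2 by ring] at hsk
      have hrk := hPrec (k + 2)
      rw [show k + 2 - 1 = k + 1 by ring, show k + 2 - 2 = k by ring] at hrk
      linear_combination (-1 : Polynomial ℤ) * hsk + ih2' -
        (C (eps p q (k + 2)) * X) * ih1' - D * hrk
  constructor
  · intro k hk1 hk2
    rw [hpos k hk1 hk2]
  · intro k hk1 hk2
    rw [hneg k (by omega) hk1]
    ring
end
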